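/- arXiv:1610.00284 — 3 statements merged into one kernel-verified Lean document; each statement's English description precedes it below -/
import Mathlib

section
/- Let n be a positive integer and let λ and μ be partitions of n with λ ≥ μ in the dominance order. Then there exists an index i with 1 ≤ i ≤ length(λ) such that λ_i ≥ μ_i ≥ λ_{i+1}, where λ_{i+1} is taken to be 0 when i = length(λ) and μ_i is taken to be 0 when i exceeds length(μ). -/
lemma getD_anti_aux (l : List ℕ) (h : l.Pairwise (· ≥ ·)) {a b : ℕ} (hab : a ≤ b) :
    l.getD b 0 ≤ l.getD a 0 := by
  by_cases hb : b < l.length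
  · have ha : a < l.length := lt_of_le_of_lt hab hb
    rw [List.getD_eq_getElem l 0 hb, List.getD_eq_getElem l 0 ha]
    rcases eq_or_lt_of_le hab with rfl | hlt
    · exact le_refl _
    · exact List.pairwise_iff_get.mp h ⟨a, ha⟩ ⟨b, hb⟩ hlt
  · rw [List.getD_eq_default l 0 (not_lt.mp hb)]
    exact Nat.zero_le _

lemma take_one_sum (l : List ℕ) : (l.take 1).sum = l.getD 0 0 := by
  cases l <;> simp

/-- Let `n` be a positive integer and let `lam` and `mu` be partitions of `n`
(weakly decreasing lists of positive natural numbers summing to `n`) with `lam ≥ mu` in the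
dominance order (every partial sum of `lam` dominates the corresponding partial sum of `mu`).
Then there exists an index `i` with `1 ≤ i ≤ length lam` such that `lam_i ≥ mu_i ≥ lam_{i+1}`,
where entries beyond the length of a partition are taken to be `0`.  Entries are accessed
one-based via `getD (i-1) 0`. -/
theorem stmt_0 (n : ℕ) (hn : 0 < n) (lam mu : List ℕ)
    (hlam_sorted : lam.Pairwise (· ≥ ·)) (hlam_pos : ∀ x ∈ lam, 0 < x)
    (hlam_sum : lam.sum = n)
    (hmu_sorted : mu.Pairwise (· ≥ ·)) (hmu_pos : ∀ x ∈ mu, 0 < x)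
    (hmu_sum : mu.sum = n)
    (hdom : ∀ j : ℕ, (mu.take j).sum ≤ (lam.take j).sum) :
    ∃ i : ℕ, 1 ≤ i ∧ i ≤ lam.length ∧
      mu.getD (i - 1) 0 ≤ lam.getD (i - 1) 0 ∧ lam.getD i 0 ≤ mu.getD (i - 1) 0 := by
  have hne : lam ≠ [] := by
    intro h
    rw [h] at hlam_sum
    simp at hlam_sum
    omega
  have hlen : 1 ≤ lam.length := by
    cases lam with
    | nil => exact absurd rfl hne
    | cons a l => simp
  -- first entry dominance
  have h1 : mu.getD 0 0 ≤ lam.getD 0 0 := by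
    have := hdom 1
    rwa [take_one_sum, take_one_sum] at this
  set Q : ℕ → Prop := fun m => m + 1 = lam.length ∨ lam.getD (m + 1) 0 < mu.getD (m + 1) 0
    with hQ
  have hdec : DecidablePred Q := fun m => by rw [hQ]; infer_instance
  have hex : ∃ m, Q m := ⟨lam.length - 1, Or.inl (by omega)⟩
  set m := Nat.find hex with hm
  have hQm : Q m := Nat.find_spec hex
  have hmle : m ≤ lam.length - 1 := Nat.find_min' hex (Or.inl (by omega))
  refine ⟨m + 1, by omega, by omega, ?_, ?_⟩
  · -- mu.getD m ≤ lam.getD m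
    simp only [Nat.add_sub_cancel]
    by_cases hm0 : m = 0
    · rw [hm0]; exact h1
    · have hk : ¬ Q (m - 1) := Nat.find_min hex (by omega)
      simp only [hQ] at hk
      push_neg at hk
      have := hk.2
      have heq : m - 1 + 1 = m := by omega
      rwa [heq] at this
  · -- lam.getD (m+1) ≤ mu.getD m
    simp only [Nat.add_sub_cancel]
    rcases hQm with h | h
    · rw [List.getD_eq_default lam 0 (le_of_eq h.symm)]
      exact Nat.zero_le _
    · exact le_trans (le_of_lt h) (getD_anti_aux mu hmu_sorted (Nat.le_succ m))
end

section
/- Let p, q, r be integers with p > r ≥ 0 and q > 0, and set n := p + q + r. In gl_n(ℚ), let Z := diag((p+q-r)·Id_p, 0_{q+r}) (the diagonal matrix whose first p diagonal entries equal p+q-r and whose remaining q+r diagonal entries are 0), let Y := E_{p+r+1,p}, let X := J_{(p,q+r)} + Y, and let S := h_{(p,q+r)} + Z. Then: (1) [S, X] = -2X; (2) [S, Y] = -2Y; (3) [Z, Y] = -(p+q-r)·Y, so Y is an eigenvector of ad(Z) with negative eigenvalue; and (4) X is nilpotent of Jordan type (p+q, r), i.e., X is conjugate to J_{(p+q,r)}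 by an element of GL_n(ℚ) (when r = 0, to J_{(p+q)}). -/
/-- Entry `(i, j)` (zero-based) of the block-diagonal matrix `diag(J_{η₁}, …, J_{ηₘ})`
built from *lower-triangular* nilpotent Jordan blocks `J_k` (which have entry `1` in
positions `(t+1, t)` for `0 ≤ t ≤ k-2` and `0` elsewhere). -/
def jordanEntry : List ℕ → ℕ → ℕ → ℚ
  | [], _, _ => 0
  | k :: rest, i, j =>
    if i < k ∧ j < k then (if i = j + 1 then 1 else 0)
    else if k ≤ i ∧ k ≤ j then jordanEntry rest (i - k) (j - k)
    else 0

/-- The block-diagonal lower-triangular Jordan matrix `J_η ∈ gl_n(ℚ)` for a composition `η`. -/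
def Jmat (n : ℕ) (η : List ℕ) : Matrix (Fin n) (Fin n) ℚ :=
  fun i j => jordanEntry η i j

/-- Entry `i` (zero-based) of the diagonal of `diag(h_{η₁}, …, h_{ηₘ})`,
where `h_k = diag(k-1, k-3, …, 1-k)`. -/
def hEntry : List ℕ → ℕ → ℚ
  | [], _ => 0
  | k :: rest, i => if i < k then ((k : ℚ) - 1) - 2 * (i : ℚ) else hEntry rest (i - k)

/-- The block-diagonal matrix `h_η = diag(h_{η₁}, …, h_{ηₘ}) ∈ gl_n(ℚ)`. -/
def Hmat (n : ℕ) (η : List ℕ) : Matrix (Fin n) (Fin n) ℚ :=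
  Matrix.diagonal fun i => hEntry η i

/-! ### Auxiliary lemmas -/

lemma jordanEntry_pair (a b i j : ℕ) (hi : i < a + b) (hj : j < a + b) :
    jordanEntry [a, b] i j = if i = j + 1 ∧ j + 1 ≠ a then 1 else 0 := by
  simp only [jordanEntry]
  split_ifs <;> first | rfl | omega

lemma hEntry_pair (a b i : ℕ) (hi : i < a + b) :
    hEntry [a, b] i = if i < a then ((a:ℚ) - 1 - 2*i) else ((b:ℚ) - 1 - 2*((i:ℚ) - a)) := by
  simp only [hEntry]
  split_ifs with h1 h2
  · rfl
  · rw [Nat.cast_sub (not_lt.mp h1)]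
  · omega

lemma sum_ind {n : ℕ} (g : Fin n → ℚ) (c : ℕ) (hc : c < n) :
    (∑ k : Fin n, if (k:ℕ) = c then g k else 0) = g ⟨c, hc⟩ := by
  rw [Finset.sum_eq_single (⟨c, hc⟩ : Fin n)]
  · simp
  · intro b _ hb
    rw [if_neg]
    simpa [Fin.ext_iff] using hb
  · simp

lemma sum_mul_ind {n : ℕ} (F : Fin n → ℚ) (c : ℕ) (hc : c < n) :
    (∑ k : Fin n, F k * (if (k:ℕ) = c then 1 else 0)) = F ⟨c, hc⟩ := by
  simp only [mul_ite, mul_one, mul_zero]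
  exact sum_ind F c hc

/-- The change-of-basis matrix: its columns are the Jordan basis for `X`. -/
def Pmat (p q r : ℕ) : Matrix (Fin (p+q+r)) (Fin (p+q+r)) ℚ :=
  fun i j => if (j:ℕ) < p then (if (i:ℕ) = (j:ℕ) then 1 else 0)
    else if (j:ℕ) < p + q then (if (i:ℕ) = (j:ℕ) + r then 1 else 0)
    else (if (i:ℕ) + q = (j:ℕ) then 1 else 0) - (if (i:ℕ) + q + r = (j:ℕ) then 1 else 0)

/-- The inverse of `Pmat`. -/
def Qmat (p q r : ℕ) : Matrix (Fin (p+q+r)) (Fin (p+q+r)) ℚ :=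
  fun a i => if (i:ℕ) < p then (if (a:ℕ) = (i:ℕ) then 1 else 0)
    else (if (a:ℕ) + r = (i:ℕ) then 1 else 0)
      + (if (i:ℕ) < p + r ∧ (a:ℕ) = (i:ℕ) + q then 1 else 0)

/-- Closed form of the matrix `X = J_{(p,q+r)} + E_{p+r+1,p}`. -/
def Xmat (p q r : ℕ) : Matrix (Fin (p+q+r)) (Fin (p+q+r)) ℚ :=
  fun a k => (if (a:ℕ) = (k:ℕ) + 1 ∧ (k:ℕ) + 1 ≠ p then 1 else 0)
    + (if (a:ℕ) = p + r ∧ (k:ℕ) + 1 = p then 1 else 0)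

/-- Closed form of the matrix `J_{(p+q,r)}`. -/
def J2mat (p q r : ℕ) : Matrix (Fin (p+q+r)) (Fin (p+q+r)) ℚ :=
  fun k j => if (k:ℕ) = (j:ℕ) + 1 ∧ (j:ℕ) + 1 ≠ p + q then 1 else 0

lemma Pcol1 (p q r : ℕ) (j : Fin (p+q+r)) (hj : (j:ℕ) < p) (k : Fin (p+q+r)) :
    Pmat p q r k j = if (k:ℕ) = (j:ℕ) then 1 else 0 := by
  simp [Pmat, hj]

lemma Pcol2 (p q r : ℕ) (j : Fin (p+q+r)) (hj : p ≤ (j:ℕ)) (hj2 : (j:ℕ) < p + q)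
    (k : Fin (p+q+r)) :
    Pmat p q r k j = if (k:ℕ) = (j:ℕ) + r then 1 else 0 := by
  simp [Pmat, hj2, not_lt.mpr hj]

lemma Pcol3 (p q r : ℕ) (hrp : r < p) (j : Fin (p+q+r)) (c : ℕ) (hc : (j:ℕ) = p + q + c) (hcr : c < r)
    (k : Fin (p+q+r)) :
    Pmat p q r k j
      = (if (k:ℕ) = p + c then 1 else 0) - (if (k:ℕ) = p + c - r then 1 else 0) := by
  have hk := k.isLt
  simp only [Pmat, if_neg (by omega : ¬ (j:ℕ) < p), if_neg (by omega : ¬ (j:ℕ) < p + q)]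
  congr 1 <;> split_ifs <;> first | rfl | omega

lemma QP_one (p q r : ℕ) (hrp : r < p) (hq : 0 < q) :
    Qmat p q r * Pmat p q r = 1 := by
  ext a j
  rw [Matrix.mul_apply]
  have ha := a.isLt
  have hjlt := j.isLt
  rcases lt_or_ge (j:ℕ) p with hj | hj
  · rw [Finset.sum_congr rfl fun k _ => by rw [Pcol1 p q r j hj k], sum_mul_ind _ _ j.isLt]
    simp only [Qmat, Matrix.one_apply, Fin.ext_iff]
    split_ifs <;> (try norm_num) <;> omega
  rcases lt_or_ge (j:ℕ) (p+q) with hj2 | hj2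
  · rw [Finset.sum_congr rfl fun k _ => by rw [Pcol2 p q r j hj hj2 k],
      sum_mul_ind _ _ (by omega : (j:ℕ) + r < p+q+r)]
    simp only [Qmat, Matrix.one_apply, Fin.ext_iff]
    split_ifs <;> (try norm_num) <;> omega
  · obtain ⟨c, hc, hcr⟩ : ∃ c, (j:ℕ) = p + q + c ∧ c < r := ⟨(j:ℕ) - (p+q), by omega, by omega⟩
    rw [Finset.sum_congr rfl fun k _ => by rw [Pcol3 p q r hrp j c hc hcr k]]
    simp only [mul_sub]
    rw [Finset.sum_sub_distrib, sum_mul_ind _ _ (by omega : p + c < p+q+r),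
      sum_mul_ind _ _ (by omega : p + c - r < p+q+r)]
    simp only [Qmat, Matrix.one_apply, Fin.ext_iff]
    split_ifs <;> (try norm_num) <;> omega

set_option maxHeartbeats 2000000 in
lemma XP_PJ (p q r : ℕ) (hrp : r < p) (hq : 0 < q) :
    Xmat p q r * Pmat p q r = Pmat p q r * J2mat p q r := by
  ext a j
  rw [Matrix.mul_apply, Matrix.mul_apply]
  have ha := a.isLt
  have hjlt := j.isLt
  have hrhs : (∑ k, Pmat p q r a k * J2mat p q r k j)
      = if h : (j:ℕ) + 1 < p + q + r ∧ (j:ℕ) + 1 ≠ p + q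
        then Pmat p q r a ⟨(j:ℕ)+1, h.1⟩ else 0 := by
    split_ifs with h
    · have e : ∀ k : Fin (p+q+r), J2mat p q r k j = if (k:ℕ) = (j:ℕ)+1 then 1 else 0 := by
        intro k; simp [J2mat, h.2]
      rw [Finset.sum_congr rfl fun k _ => by rw [e k], sum_mul_ind _ _ h.1]
    · have e : ∀ k : Fin (p+q+r), J2mat p q r k j = 0 := by
        intro k
        have hk := k.isLt
        simp only [J2mat, ite_eq_right_iff]
        intro hk2
        exact absurd h (not_not.mpr ⟨by omega, hk2.2⟩)
      rw [Finset.sum_congr rfl fun k _ => by rw [e k, mul_zero]]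
      simp
  rw [hrhs]
  rcases lt_or_ge (j:ℕ) p with hj | hj
  · rw [Finset.sum_congr rfl fun k _ => by rw [Pcol1 p q r j hj k], sum_mul_ind _ _ j.isLt,
      dif_pos ⟨by omega, by omega⟩]
    simp only [Xmat, Pmat]
    split_ifs <;> (try norm_num) <;> omega
  rcases lt_or_ge (j:ℕ) (p+q) with hj2 | hj2
  · rw [Finset.sum_congr rfl fun k _ => by rw [Pcol2 p q r j hj hj2 k],
      sum_mul_ind _ _ (by omega : (j:ℕ) + r < p+q+r)]
    by_cases hj1 : (j:ℕ) + 1 = p + q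
    · rw [dif_neg (by omega)]
      simp only [Xmat]
      split_ifs <;> (try norm_num) <;> omega
    · rw [dif_pos ⟨by omega, hj1⟩]
      simp only [Xmat, Pmat]
      split_ifs <;> (try norm_num) <;> omega
  · obtain ⟨c, hc, hcr⟩ : ∃ c, (j:ℕ) = p + q + c ∧ c < r := ⟨(j:ℕ) - (p+q), by omega, by omega⟩
    rw [Finset.sum_congr rfl fun k _ => by rw [Pcol3 p q r hrp j c hc hcr k]]
    simp only [mul_sub]
    rw [Finset.sum_sub_distrib, sum_mul_ind _ _ (by omega : p + c < p+q+r),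
      sum_mul_ind _ _ (by omega : p + c - r < p+q+r)]
    by_cases hcr1 : c + 1 = r
    · rw [dif_neg (by omega)]
      simp only [Xmat]
      split_ifs <;> (try norm_num) <;> omega
    · rw [dif_pos ⟨by omega, by omega⟩]
      simp only [Xmat, Pmat]
      split_ifs <;> (try norm_num) <;> omega

/-- Let `p, q, r` be integers with `p > r ≥ 0`, `q > 0`, `n = p + q + r`.
In `gl_n(ℚ)` let `Z = diag((p+q-r)·Id_p, 0_{q+r})`, `Y = E_{p+r+1,p}` (one-based indices),
`X = J_{(p,q+r)} + Y` and `S = h_{(p,q+r)} + Z`.  Then `[S,X] = -2X`, `[S,Y] = -2Y`,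
`[Z,Y] = -(p+q-r)·Y` with `p+q-r > 0` (so `Y` is an eigenvector of `ad Z` with negative
eigenvalue), and `X` is nilpotent of Jordan type `(p+q, r)`, i.e. conjugate to `J_{(p+q,r)}`
by an element of `GL_n(ℚ)` (for `r = 0` the list `[p+q, r]` yields the same matrix
as `[p+q]`). -/
theorem stmt_1 (p q r : ℕ) (hrp : r < p) (hq : 0 < q)
    (Z Y X S : Matrix (Fin (p + q + r)) (Fin (p + q + r)) ℚ)
    (hZ : Z = Matrix.diagonal fun i : Fin (p + q + r) => if (i : ℕ) < p then ((p : ℚ) + q - r) else 0)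
    (hY : Y = Matrix.single ⟨p + r, by omega⟩ ⟨p - 1, by omega⟩ 1)
    (hX : X = Jmat (p + q + r) [p, q + r] + Y)
    (hS : S = Hmat (p + q + r) [p, q + r] + Z) :
    S * X - X * S = (-2 : ℚ) • X ∧
    S * Y - Y * S = (-2 : ℚ) • Y ∧
    (Z * Y - Y * Z = (-((p : ℚ) + q - r)) • Y ∧ 0 < (p : ℚ) + q - r) ∧
    (∃ g : GL (Fin (p + q + r)) ℚ,
      (g : Matrix (Fin (p + q + r)) (Fin (p + q + r)) ℚ) * X *
        ((g⁻¹ : GL (Fin (p + q + r)) ℚ) : Matrix (Fin (p + q + r)) (Fin (p + q + r)) ℚ)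
        = Jmat (p + q + r) [p + q, r]) := by
  subst hX hS hY hZ
  have hXX : Jmat (p + q + r) [p, q + r]
      + Matrix.single (⟨p + r, by omega⟩ : Fin (p+q+r)) (⟨p - 1, by omega⟩ : Fin (p+q+r)) 1
      = Xmat p q r := by
    ext a k
    have ha := a.isLt
    have hk := k.isLt
    simp only [Jmat, Xmat, Matrix.add_apply, Matrix.single, Matrix.of_apply,
      Fin.ext_iff]
    rw [jordanEntry_pair p (q+r) a k (by omega) (by omega)]
    congr 1
    split_ifs <;> (try norm_num) <;> omega
  refine ⟨?_, ?_, ⟨?_, ?_⟩, ?_⟩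
  · -- [S, X] = -2 X
    rw [hXX]
    clear hXX
    simp only [Hmat]
    rw [Matrix.diagonal_add]
    ext i j
    have hi := i.isLt
    have hj := j.isLt
    rw [Matrix.sub_apply, Matrix.diagonal_mul, Matrix.mul_diagonal, Matrix.smul_apply,
      smul_eq_mul]
    simp only [Pi.add_apply, Xmat]
    rw [hEntry_pair p (q+r) i (by omega), hEntry_pair p (q+r) j (by omega)]
    push_cast
    split_ifs <;> first | (exfalso; omega) | (norm_num; done) | (qify at *; linarith)
  · -- [S, Y] = -2 Y
    clear hXX
    simp only [Hmat]
    rw [Matrix.diagonal_add]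
    ext i j
    have hi := i.isLt
    have hj := j.isLt
    rw [Matrix.sub_apply, Matrix.diagonal_mul, Matrix.mul_diagonal, Matrix.smul_apply,
      smul_eq_mul]
    simp only [Pi.add_apply, Matrix.single, Matrix.of_apply, Fin.ext_iff]
    simp only [show ((p - 1 : ℕ) = (j:ℕ)) ↔ ((j:ℕ) + 1 = p) from by omega]
    rw [hEntry_pair p (q+r) i (by omega), hEntry_pair p (q+r) j (by omega)]
    push_cast
    split_ifs <;> first | (exfalso; omega) | (norm_num; done) | (qify at *; linarith)
  · -- [Z, Y] = -(p+q-r) Y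
    clear hXX
    ext i j
    have hi := i.isLt
    have hj := j.isLt
    rw [Matrix.sub_apply, Matrix.diagonal_mul, Matrix.mul_diagonal, Matrix.smul_apply,
      smul_eq_mul]
    simp only [Matrix.single, Matrix.of_apply, Fin.ext_iff]
    simp only [show ((p - 1 : ℕ) = (j:ℕ)) ↔ ((j:ℕ) + 1 = p) from by omega]
    split_ifs <;> first | (exfalso; omega) | (norm_num; done) | (qify at *; linarith)
  · -- positivity
    have h1 : (r:ℚ) < p := by exact_mod_cast hrp
    have h2 : (0:ℚ) < q := by exact_mod_cast hq
    linarith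
  · -- conjugacy
    have h1 := QP_one p q r hrp hq
    have h2 : Pmat p q r * Qmat p q r = 1 := mul_eq_one_comm.mp h1
    have hJJ : Jmat (p + q + r) [p + q, r] = J2mat p q r := by
      ext a k
      have ha := a.isLt
      have hk := k.isLt
      simp only [Jmat, J2mat]
      rw [jordanEntry_pair (p+q) r a k (by omega) (by omega)]
    refine ⟨⟨Qmat p q r, Pmat p q r, h1, h2⟩, ?_⟩
    show Qmat p q r * _ * Pmat p q r = _
    rw [hXX, hJJ, Matrix.mul_assoc, XP_PJ p q r hrp hq, ← Matrix.mul_assoc, h1, Matrix.one_mul]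
end

section
/- Let V be a Fréchet space over ℂ equipped with a structure of topological module over the Fréchet algebra ℂ[[t]] of formal power series. Then t acts locally nilpotently on the continuous dual space V*: for every continuous linear functional λ : V → ℂ there exists a natural number k such that λ(t^k · v) = 0 for all v ∈ V. -/
open scoped Topology Pointwise

/-- The Fréchet topology on `ℂ[[t]]`: the product topology on its coefficients,
i.e. the topology induced by the map sending a power series to its coefficient
sequence in `ℕ → ℂ` (with the product topology). -/
noncomputable instance : TopologicalSpace (PowerSeries ℂ) :=
  TopologicalSpace.induced
    (fun f : PowerSeries ℂ => fun n : ℕ => PowerSeries.coeff n f) inferInstance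

/-- Let `V` be a Fréchet space over `ℂ` (a complete metrizable locally
convex topological `ℂ`-vector space) equipped with a structure of topological module over
the Fréchet algebra `ℂ[[t]]` of formal power series (a jointly continuous `ℂ[[t]]`-module
action whose restriction to the constants `ℂ ⊆ ℂ[[t]]` is the scalar multiplication of
`V`, the latter encoded by `IsScalarTower ℂ (ℂ[[t]]) V`).  Then `t` acts locally
nilpotently on the continuous dual `V*`: for every continuous linear functional
`lam : V → ℂ` there is `k : ℕ` with `lam (t^k • v) = 0` for all `v ∈ V`. -/
theorem stmt_5 (V : Type*) [AddCommGroup V] [UniformSpace V] [IsUniformAddGroup V]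
    [CompleteSpace V] [TopologicalSpace.MetrizableSpace V]
    [Module ℝ V] [Module ℂ V] [IsScalarTower ℝ ℂ V]
    [ContinuousSMul ℂ V] [LocallyConvexSpace ℝ V]
    [Module (PowerSeries ℂ) V] [IsScalarTower ℂ (PowerSeries ℂ) V]
    [ContinuousSMul (PowerSeries ℂ) V]
    (lam : V →L[ℂ] ℂ) :
    ∃ k : ℕ, ∀ v : V, lam (((PowerSeries.X : PowerSeries ℂ) ^ k) • v) = 0 := by
  classical
  -- the jointly continuous bilinear map (f, v) ↦ lam (f • v)
  have hcont : Continuous fun p : PowerSeries ℂ × V => lam (p.1 • p.2) :=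
    lam.continuous.comp continuous_smul
  have h0 : (fun p : PowerSeries ℂ × V => lam (p.1 • p.2)) (0, 0) = 0 := by
    simp
  have hmem : (fun p : PowerSeries ℂ × V => lam (p.1 • p.2)) ⁻¹' Metric.ball 0 1
      ∈ 𝓝 ((0 : PowerSeries ℂ), (0 : V)) := by
    apply hcont.continuousAt.preimage_mem_nhds
    simp only [h0, zero_smul, map_zero]
    exact Metric.ball_mem_nhds 0 one_pos
  rw [mem_nhds_prod_iff] at hmem
  obtain ⟨U, hU, W, hW, hUW⟩ := hmem
  -- unpack the induced topology on ℂ[[t]]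
  rw [nhds_induced] at hU
  obtain ⟨s, hs, hsU⟩ := hU
  have hs' : s ∈ Filter.pi fun _ : ℕ => 𝓝 (0 : ℂ) := by
    rw [← nhds_pi]
    simpa using hs
  obtain ⟨I, hI, ts, hts, hpi⟩ := Filter.mem_pi.mp hs'
  -- choose k larger than all indices in I
  obtain ⟨N, hN⟩ := hI.bddAbove
  set k := N + 1 with hk
  refine ⟨k, ?_⟩
  -- c • X^k lies in U for every c : ℂ
  have hXk : ∀ c : ℂ, (c • (PowerSeries.X : PowerSeries ℂ) ^ k) ∈ U := by
    intro c
    apply hsU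
    apply hpi
    intro i hi
    have hik : i ≠ k := by
      have := hN hi
      omega
    have : (PowerSeries.coeff i) (c • (PowerSeries.X : PowerSeries ℂ) ^ k) = 0 := by
      rw [map_smul, PowerSeries.coeff_X_pow, if_neg hik, smul_zero]
    simp only [Set.mem_pi] at *
    rw [this]
    exact mem_of_mem_nhds (hts i)
  -- hence lam (X^k • w) = 0 for all w ∈ W
  have hWzero : ∀ w ∈ W, lam ((PowerSeries.X : PowerSeries ℂ) ^ k • w) = 0 := by
    intro w hw
    by_contra hne
    set a := lam ((PowerSeries.X : PowerSeries ℂ) ^ k • w) with ha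
    have : ∀ c : ℂ, ‖c * a‖ < 1 := by
      intro c
      have hmem : ((c • (PowerSeries.X : PowerSeries ℂ) ^ k), w) ∈ U ×ˢ W :=
        ⟨hXk c, hw⟩
      have := hUW hmem
      simp only [Set.mem_preimage, Metric.mem_ball, dist_zero_right] at this
      rw [smul_assoc, map_smul, smul_eq_mul] at this
      exact this
    have h2 := this (2 / a)
    rw [div_mul_cancel₀ _ hne] at h2
    norm_num at h2
  -- W is absorbent: every v is a scalar multiple of some w ∈ W
  intro v
  have habs : Absorbent ℂ W := absorbent_nhds_zero hW
  obtain ⟨c, hc, hcv⟩ : ∃ c : ℂ, c ≠ 0 ∧ v ∈ c • W := by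
    obtain ⟨c, h1, h2⟩ := ((Bornology.eventually_ne_cobounded (0 : ℂ)).and (habs v)).exists
    exact ⟨c, h1, h2 rfl⟩
  obtain ⟨w, hw, rfl⟩ := hcv
  have : (PowerSeries.X : PowerSeries ℂ) ^ k • (c • w)
      = c • ((PowerSeries.X : PowerSeries ℂ) ^ k • w) := smul_comm _ _ _
  rw [this, map_smul, hWzero w hw, smul_zero]
end
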